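/- If every eigenvalue λᵢ of D_ρ is nonzero and H^λ(b_ρ(Φ)) = S(Φ(D_ρ)), then Φ(D_ρ) = (1/n)·I, so S(Φ(D_ρ)) = log n, and the bistochastic matrix b_ρ(Φ) has all entries equal to 1/n. -/

import Mathlib

open Matrix BigOperators ComplexOrder

/-- Entropy function `η(t) = -t log t` (with `η(0)=0` since `Real.log 0 = 0`). -/
noncomputable def eta (t : ℝ) : ℝ := -(t * Real.log t)

/-- Von Neumann entropy of a matrix: sum of `η` over eigenvalues (0 if not Hermitian). -/
noncomputable def vnEntropy {n : ℕ} (D : Matrix (Fin n) (Fin n) ℂ) : ℝ :=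
  if h : D.IsHermitian then ∑ i, eta (h.eigenvalues i) else 0

/-- Positive, unital, trace-preserving linear map on `M_n(ℂ)`. -/
def IsPUTP {n : ℕ} (Φ : Matrix (Fin n) (Fin n) ℂ →ₗ[ℂ] Matrix (Fin n) (Fin n) ℂ) : Prop :=
  (∀ x, x.PosSemidef → (Φ x).PosSemidef) ∧ Φ 1 = 1 ∧ ∀ x, (Φ x).trace = x.trace

/-- A family of mutually orthogonal rank-one (trace-one) self-adjoint projections
summing to the identity. -/
def IsSpectralFamily {n : ℕ} (e : Fin n → Matrix (Fin n) (Fin n) ℂ) : Prop :=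
  (∀ i, (e i).IsHermitian) ∧ (∀ i j, e i * e j = if i = j then e i else 0) ∧
    (∑ i, e i = 1) ∧ (∀ i, (e i).trace = 1)

/-! Write `Φ(D) = ∑ⱼ μⱼ pⱼ`. Then `μⱼ = Tr(Φ(D) pⱼ) = ∑ᵢ λᵢ bᵢⱼ`, the weights `λᵢ` are a probability
vector with positive entries, and the columns of `b` are probability vectors. Since the eigenvalues
of `Φ(D)` are the `μⱼ`, `S(Φ(D)) = ∑ⱼ η(∑ᵢ λᵢ bᵢⱼ)`, which dominates `∑ᵢ λᵢ ∑ⱼ η(bᵢⱼ)` column by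
column by concavity of `η`. Equality and strict concavity force every column of `b` to be
constant, hence equal to `1/n`, and then `μⱼ = 1/n` for all `j`. -/

open Polynomial

namespace Matrix

variable {m : Type*} [Fintype m]

lemma re_trace_mul_nonneg_of_posSemidef [DecidableEq m] {A B : Matrix m m ℂ} (hA : A.PosSemidef)
    (hB : B.PosSemidef) : 0 ≤ (A * B).trace.re := by
  open scoped MatrixOrder in
  obtain ⟨C, rfl⟩ := CStarAlgebra.nonneg_iff_eq_star_mul_self.mp hB.nonneg
  rw [star_eq_conjTranspose, ← mul_assoc, trace_mul_cycle]
  exact (Complex.nonneg_iff.mp (hA.mul_mul_conjTranspose_same C).trace_nonneg).1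

lemma exists_mulVec_eq_self_of_mul_self_eq {q : Matrix m m ℂ} (hq : q * q = q) (h0 : q ≠ 0) :
    ∃ v : m → ℂ, q *ᵥ v = v ∧ star v ⬝ᵥ v = 1 := by
  obtain ⟨k, hk⟩ : ∃ k, (fun i => q i k) ≠ 0 := by
    by_contra! h
    exact h0 (ext fun i k => congrFun (h k) i)
  set u : m → ℂ := fun i => q i k
  have hqu : q *ᵥ u = u := funext fun i => by
    simpa [mulVec, dotProduct, Matrix.mul_apply] using congrFun (congrFun hq i) k
  obtain ⟨s, hs, hsu⟩ : ∃ s : ℝ, 0 < s ∧ star u ⬝ᵥ u = s := by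
    obtain ⟨hre, him⟩ := Complex.pos_iff.mp (dotProduct_star_self_pos_iff.mpr hk)
    exact ⟨_, hre, Complex.ext rfl (by simpa using him.symm)⟩
  refine ⟨((Real.sqrt s)⁻¹ : ℂ) • u, by rw [mulVec_smul, hqu], ?_⟩
  rw [star_smul, smul_dotProduct, dotProduct_smul, hsu, smul_smul, smul_eq_mul]
  simp only [star_inv₀, Complex.star_def, Complex.conj_ofReal]
  norm_cast
  rw [← mul_inv, Real.mul_self_sqrt hs.le, inv_mul_cancel₀ hs.ne']

lemma IsHermitian.sum_comp_eigenvalues_eq_of_charpoly_eq [DecidableEq m] {A : Matrix m m ℂ}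
    (hA : A.IsHermitian) {μ : m → ℝ} (h : A.charpoly = ∏ j, (X - C (μ j : ℂ))) (f : ℝ → ℝ) :
    ∑ i, f (hA.eigenvalues i) = ∑ j, f (μ j) := by
  set E := Finset.univ.val.map hA.eigenvalues
  set M := Finset.univ.val.map μ
  have hM : A.charpoly = ((M.map Complex.ofReal).map fun a => X - C a).prod := by
    rw [h, Finset.prod_eq_multiset_prod, Multiset.map_map, Multiset.map_map]; rfl
  have hE : A.charpoly.roots = E.map Complex.ofReal := by
    rw [hA.roots_charpoly_eq_eigenvalues, Multiset.map_map]; rfl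
  rw [hM, roots_multiset_prod_X_sub_C] at hE
  have hEM : E = M := Multiset.map_injective Complex.ofReal_injective hE.symm
  have := congrArg (fun s => (s.map f).sum) hEM
  simpa only [E, M, Multiset.map_map, Function.comp_def, ← Finset.sum_eq_multiset_sum] using this

end Matrix

namespace IsSpectralFamily

variable {n : ℕ} {e : Fin n → Matrix (Fin n) (Fin n) ℂ} (he : IsSpectralFamily e)
include he

lemma mul_self (i : Fin n) : e i * e i = e i := by
  simpa using he.2.1 i i

lemma posSemidef (i : Fin n) : (e i).PosSemidef := by
  have : e i = (e i)ᴴ * e i := by rw [(he.1 i).eq, he.mul_self]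
  exact this ▸ posSemidef_conjTranspose_mul_self _

lemma sum_smul_mul (c : Fin n → ℂ) (i : Fin n) : (∑ k, c k • e k) * e i = c i • e i := by
  simp only [Finset.sum_mul, smul_mul_assoc, he.2.1, smul_ite, smul_zero, Finset.sum_ite_eq']
  simp

lemma trace_sum_smul_mul (c : Fin n → ℂ) (i : Fin n) : ((∑ k, c k • e k) * e i).trace = c i := by
  rw [he.sum_smul_mul, trace_smul, he.2.2.2, smul_eq_mul, mul_one]

lemma trace_sum_smul (c : Fin n → ℂ) : (∑ k, c k • e k).trace = ∑ k, c k := by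
  simp [trace_sum, trace_smul, he.2.2.2]

lemma isHermitian_sum_smul (μ : Fin n → ℝ) : (∑ k, (μ k : ℂ) • e k).IsHermitian :=
  isSelfAdjoint_sum _ fun k _ => (he.1 k).smul (Complex.conj_ofReal (μ k))

lemma exists_orthonormal_fixed_vectors : ∃ v : Fin n → Fin n → ℂ,
    (∀ j, e j *ᵥ v j = v j) ∧ ∀ i j, star (v i) ⬝ᵥ v j = if i = j then 1 else 0 := by
  have h0 (j : Fin n) : e j ≠ 0 := fun h => by simpa [h] using he.2.2.2 j
  choose v hv hnorm using fun j => exists_mulVec_eq_self_of_mul_self_eq (he.mul_self j) (h0 j)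
  refine ⟨v, hv, fun i j => ?_⟩
  split_ifs with hij
  · exact hij ▸ hnorm i
  · calc star (v i) ⬝ᵥ v j = star (e i *ᵥ v i) ⬝ᵥ (e j *ᵥ v j) := by rw [hv, hv]
      _ = star (v i) ⬝ᵥ ((e i * e j) *ᵥ v j) := by
        rw [star_mulVec, ← dotProduct_mulVec, (he.1 i).eq, mulVec_mulVec]
      _ = 0 := by rw [he.2.1, if_neg hij, zero_mulVec, dotProduct_zero]

lemma charpoly_sum_smul (c : Fin n → ℂ) :
    (∑ k, c k • e k).charpoly = ∏ k, (X - C (c k)) := by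
  obtain ⟨v, hv, hvv⟩ := he.exists_orthonormal_fixed_vectors
  set A := ∑ k, c k • e k
  set U : Matrix (Fin n) (Fin n) ℂ := of fun i j => v j i
  have hUU : Uᴴ * U = 1 := by
    ext i j
    simpa [U, Matrix.mul_apply, dotProduct, one_apply] using hvv i j
  have hAv (j : Fin n) : A *ᵥ v j = c j • v j := by
    conv_lhs => rw [← hv j, mulVec_mulVec, he.sum_smul_mul, smul_mulVec, hv]
  have hAU : A * U = U * diagonal c := by
    ext i j
    rw [mul_diagonal]
    simpa [U, Matrix.mul_apply, mulVec, dotProduct, mul_comm] using congrFun (hAv j) i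
  calc A.charpoly = (U * (diagonal c * Uᴴ)).charpoly := by
        rw [← mul_assoc, ← hAU, mul_assoc, mul_eq_one_comm.mp hUU, mul_one]
    _ = (diagonal c).charpoly := by rw [charpoly_mul_comm, mul_assoc, hUU, mul_one]
    _ = _ := charpoly_diagonal c

lemma vnEntropy_sum_smul (μ : Fin n → ℝ) :
    vnEntropy (∑ k, (μ k : ℂ) • e k) = ∑ k, eta (μ k) := by
  rw [vnEntropy, dif_pos (he.isHermitian_sum_smul μ)]
  exact (he.isHermitian_sum_smul μ).sum_comp_eigenvalues_eq_of_charpoly_eq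
    (he.charpoly_sum_smul _) eta

end IsSpectralFamily

lemma eta_eq_negMulLog : eta = Real.negMulLog :=
  funext fun x => (neg_mul x (Real.log x)).symm

-- at `n = 0` both sides vanish, as `Real.log 0 = 0`
lemma natCast_mul_eta_inv (n : ℕ) : n * eta (n : ℝ)⁻¹ = Real.log n := by
  rcases n.eq_zero_or_pos with rfl | hn
  · simp
  · show (n : ℝ) * -((n : ℝ)⁻¹ * Real.log (n : ℝ)⁻¹) = _
    rw [Real.log_inv]
    field_simp

lemma eq_inv_card_of_sum_eq_one {ι : Type*} [Fintype ι] {f : ι → ℝ} (hf : ∀ i i', f i = f i')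
    (h : ∑ i, f i = 1) (i : ι) : f i = (Fintype.card ι : ℝ)⁻¹ := by
  rw [Finset.sum_congr rfl fun i' _ => hf i' i, Finset.sum_const, Finset.card_univ,
    nsmul_eq_mul] at h
  exact eq_inv_of_mul_eq_one_right h

namespace Real

theorem eq_of_sum_mul_sum_negMulLog_eq {ι κ : Type*} [Fintype ι] [Fintype κ] {w : ι → ℝ}
    (hw : ∀ i, 0 < w i) (hw1 : ∑ i, w i = 1) {b : ι → κ → ℝ} (hb : ∀ i j, 0 ≤ b i j)
    (h : ∑ i, w i * ∑ j, negMulLog (b i j) = ∑ j, negMulLog (∑ i, w i * b i j))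
    (j : κ) (i i' : ι) : b i j = b i' j := by
  have hle (j : κ) : ∑ i, w i * negMulLog (b i j) ≤ negMulLog (∑ i, w i * b i j) := by
    simpa only [smul_eq_mul] using concaveOn_negMulLog.le_map_sum (fun i _ => (hw i).le) hw1
      (fun i _ => Set.mem_Ici.mpr (hb i j))
  have hsum : ∑ j, ∑ i, w i * negMulLog (b i j) = ∑ j, negMulLog (∑ i, w i * b i j) := by
    rw [← h, Finset.sum_comm]
    simp_rw [Finset.mul_sum]
  have hcol := (Finset.sum_eq_sum_iff_of_le fun j _ => hle j).mp hsum j (Finset.mem_univ j)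
  exact strictConcaveOn_negMulLog.eq_of_map_sum_eq (fun i _ => hw i) hw1
    (fun i _ => Set.mem_Ici.mpr (hb i j)) (by simpa only [smul_eq_mul] using hcol.ge)
    (Finset.mem_univ i) (Finset.mem_univ i')

end Real

section Transition

variable {n : ℕ} {Φ : Matrix (Fin n) (Fin n) ℂ →ₗ[ℂ] Matrix (Fin n) (Fin n) ℂ}
  {e p : Fin n → Matrix (Fin n) (Fin n) ℂ} {b : Fin n → Fin n → ℝ}

lemma nonneg_of_eq_trace (hΦ : ∀ x, x.PosSemidef → (Φ x).PosSemidef) (he : IsSpectralFamily e)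
    (hp : IsSpectralFamily p) (hb : ∀ i j, (b i j : ℂ) = (Φ (e i) * p j).trace) (i j : Fin n) :
    0 ≤ b i j := by
  have := re_trace_mul_nonneg_of_posSemidef (hΦ _ (he.posSemidef i)) (hp.posSemidef j)
  rwa [← hb, Complex.ofReal_re] at this

lemma sum_eq_one_of_eq_trace (hΦ : Φ 1 = 1) (he : IsSpectralFamily e)
    (hp : IsSpectralFamily p) (hb : ∀ i j, (b i j : ℂ) = (Φ (e i) * p j).trace) (j : Fin n) :
    ∑ i, b i j = 1 := by
  have : (∑ i, b i j : ℂ) = 1 := by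
    simp_rw [hb, ← trace_sum, ← Finset.sum_mul, ← map_sum, he.2.2.1, hΦ, one_mul, hp.2.2.2]
  exact_mod_cast this

lemma IsSpectralFamily.eq_sum_mul_of_eq_trace (hp : IsSpectralFamily p) {lam mu : Fin n → ℝ}
    (hΦD : Φ (∑ i, (lam i : ℂ) • e i) = ∑ j, (mu j : ℂ) • p j)
    (hb : ∀ i j, (b i j : ℂ) = (Φ (e i) * p j).trace) (j : Fin n) :
    mu j = ∑ i, lam i * b i j := by
  have := hp.trace_sum_smul_mul (fun k => (mu k : ℂ)) j
  rw [← hΦD, map_sum, Finset.sum_mul, trace_sum] at this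
  simp_rw [map_smul, smul_mul_assoc, trace_smul, ← hb, smul_eq_mul] at this
  exact_mod_cast this.symm

end Transition

lemma IsSpectralFamily.nonneg_of_posSemidef {n : ℕ} {e : Fin n → Matrix (Fin n) (Fin n) ℂ}
    (he : IsSpectralFamily e) {lam : Fin n → ℝ} (hD : (∑ k, (lam k : ℂ) • e k).PosSemidef)
    (i : Fin n) : 0 ≤ lam i := by
  have := re_trace_mul_nonneg_of_posSemidef hD (he.posSemidef i)
  rwa [he.trace_sum_smul_mul, Complex.ofReal_re] at this

theorem stmt_18 {n : ℕ} (Φ : Matrix (Fin n) (Fin n) ℂ →ₗ[ℂ] Matrix (Fin n) (Fin n) ℂ)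
    (hΦ : IsPUTP Φ)
    (D : Matrix (Fin n) (Fin n) ℂ) (hD : D.PosSemidef) (htr : D.trace = 1)
    (lam mu : Fin n → ℝ) (e p : Fin n → Matrix (Fin n) (Fin n) ℂ)
    (he : IsSpectralFamily e) (hp : IsSpectralFamily p)
    (hDdec : D = ∑ i, (lam i : ℂ) • e i)
    (hΦDdec : Φ D = ∑ j, (mu j : ℂ) • p j)
    (b : Fin n → Fin n → ℝ)
    (hb : ∀ i j, (b i j : ℂ) = (Φ (e i) * p j).trace)
    (hpos : ∀ i, lam i ≠ 0)
    (heq : (∑ i, lam i * ∑ j, eta (b i j)) = vnEntropy (Φ D)) :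
    Φ D = ((n : ℂ)⁻¹) • 1 ∧ vnEntropy (Φ D) = Real.log n ∧
      ∀ i j, b i j = (n : ℝ)⁻¹ := by
  subst hDdec
  have hlam (i : Fin n) : 0 < lam i := (he.nonneg_of_posSemidef hD i).lt_of_ne' (hpos i)
  have hlam1 : ∑ i, lam i = 1 := by exact_mod_cast (he.trace_sum_smul _).symm.trans htr
  have hmu := hp.eq_sum_mul_of_eq_trace hΦDdec hb
  have hS : vnEntropy (Φ _) = ∑ j, eta (mu j) := hΦDdec ▸ hp.vnEntropy_sum_smul mu
  have hbn (i j : Fin n) : b i j = (n : ℝ)⁻¹ := by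
    have hconst := Real.eq_of_sum_mul_sum_negMulLog_eq hlam hlam1
      (nonneg_of_eq_trace hΦ.1 he hp hb) (by simpa only [eta_eq_negMulLog, hS, hmu] using heq) j
    simpa using eq_inv_card_of_sum_eq_one (hconst · ·) (sum_eq_one_of_eq_trace hΦ.2.1 he hp hb j) i
  have hmun (j : Fin n) : mu j = (n : ℝ)⁻¹ := by
    simp only [hmu, hbn, ← Finset.sum_mul, hlam1, one_mul]
  refine ⟨?_, ?_, hbn⟩
  · simp only [hΦDdec, hmun, Complex.ofReal_inv, Complex.ofReal_natCast, ← Finset.smul_sum,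
      hp.2.2.1]
  · simp only [hS, hmun, Finset.sum_const, Finset.card_univ, Fintype.card_fin, nsmul_eq_mul,
      natCast_mul_eta_inv]
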